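/- arXiv:2309.08089 — 2 statements merged into one kernel-verified Lean document; each statement's English description precedes it below -/
import Mathlib

section
/- Let Γ(x,y) = c(n)|x−y|^{2−n} be the fundamental solution of the Laplacian on ℝ^n, n ≥ 3, and for y ≠ 0 expand Γ(·,y) at 0 as Γ(x,y) = Σ_k Γ_k(y) P_{y,k}(x) where P_{y,k} are homogeneous harmonic polynomials of degree k normalized by ⨍_{∂B_1} P_{y,k}^2 = 1. Then |Γ_k(y)| ≤ c(n) (4/3)^k |y|^{2−n−k} for every k ≥ 0. -/
/-!
Pick a unit vector `θ` with `P_k(θ)² ≥ 1`; it exists because `P_k²` has mean `1` on the sphere.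
Along the ray `r ↦ rθ`, homogeneity turns the expansion into the one-variable power series
`∑ Γ_j P_j(θ) rʲ` of `c (r² - 2⟪θ, y⟫ r + |y|²)^((2-n)/2)`. This function extends holomorphically
to the disc `|z| < |y|`, where the quadratic avoids `(-∞, 0]`, and on the circle `|z| = 3|y|/4`
the quadratic has modulus at least `(|y|/4)²`, so Cauchy's estimate on that circle bounds the
`k`-th coefficient.
-/

open MeasureTheory Metric

/-- `P` is a homogeneous harmonic polynomial of degree `d` on `ℝⁿ`. -/
def IsHomHarmPoly {n : ℕ} (d : ℕ) (P : EuclideanSpace ℝ (Fin n) → ℝ) : Prop :=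
  ContDiff ℝ ⊤ P ∧
  (∀ x, ∑ i : Fin n, fderiv ℝ (fun z => fderiv ℝ P z (EuclideanSpace.single i 1)) x
      (EuclideanSpace.single i 1) = 0) ∧
  (∀ (c : ℝ) (x), 0 ≤ c → P (c • x) = c ^ d * P x) ∧
  ∃ q : MvPolynomial (Fin n) ℝ, ∀ x,
    P x = MvPolynomial.eval (fun i => (WithLp.equiv 2 (Fin n → ℝ)) x i) q

open Filter Topology

theorem exists_mem_setAverage_le_of_ne_zero {α : Type*} [MeasurableSpace α] {μ : Measure α}
    {s : Set α} {f : α → ℝ} (h : ⨍ x in s, f x ∂μ ≠ 0) : ∃ x ∈ s, ⨍ a in s, f a ∂μ ≤ f x := by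
  refine exists_setAverage_le (fun hμ => h ?_) (fun hμ => h ?_) (by_contra fun hf => h ?_)
  · simp [Measure.restrict_eq_zero.mpr hμ]
  · simp [setAverage_eq, measureReal_def, hμ]
  · simp [setAverage_eq, integral_undef hf]

theorem quadratic_mem_slitPlane {b R : ℝ} (hb : |b| ≤ R) {z : ℂ} (hz : ‖z‖ < R) :
    z ^ 2 - 2 * b * z + R ^ 2 ∈ Complex.slitPlane := by
  have hz' : z.re ^ 2 + z.im ^ 2 < R ^ 2 := by
    rw [pow_two z.re, pow_two z.im, ← Complex.normSq_apply, ← Complex.sq_norm]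
    exact pow_lt_pow_left₀ hz (norm_nonneg z) two_ne_zero
  have hb' : b ^ 2 ≤ R ^ 2 := sq_le_sq' (abs_le.mp hb).1 (abs_le.mp hb).2
  rw [Complex.mem_slitPlane_iff]
  by_contra! h
  obtain ⟨h_re, h_im⟩ := h
  simp only [Complex.sub_re, Complex.add_re, Complex.sub_im, Complex.add_im, pow_two,
    Complex.mul_re, Complex.mul_im, Complex.ofReal_re, Complex.ofReal_im, Complex.re_ofNat,
    Complex.im_ofNat] at h_re h_im
  rcases mul_eq_zero.mp (show z.im * (z.re - b) = 0 by linarith) with h_im | h_re'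
  · rw [h_im] at h_re hz'
    nlinarith [sq_nonneg (z.re - b)]
  · rw [show z.re = b by linarith] at h_re hz'
    nlinarith

theorem quadratic_eq_mul_sub_conj (w z : ℂ) :
    z ^ 2 - 2 * w.re * z + ‖w‖ ^ 2 = (z - w) * (z - (starRingEnd ℂ) w) := by
  have h_sum : w + (starRingEnd ℂ) w = 2 * w.re := by rw [Complex.add_conj]; push_cast; ring
  have h_prod : w * (starRingEnd ℂ) w = ‖w‖ ^ 2 := by
    rw [Complex.mul_conj, Complex.normSq_eq_norm_sq]; push_cast; ring
  linear_combination z * h_sum - h_prod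

theorem sq_sub_norm_le_norm_quadratic {b R : ℝ} (hb : |b| ≤ R) {z : ℂ} (hz : ‖z‖ ≤ R) :
    (R - ‖z‖) ^ 2 ≤ ‖z ^ 2 - 2 * b * z + R ^ 2‖ := by
  -- `w` and its conjugate are the roots of the quadratic; both lie on the circle of radius `R`.
  set w : ℂ := ⟨b, √(R ^ 2 - b ^ 2)⟩
  have hw : ‖w‖ = R := by
    rw [Complex.norm_def, Complex.normSq_mk, ← pow_two, ← pow_two,
      Real.sq_sqrt (by nlinarith [abs_le.mp hb]), add_sub_cancel,
      Real.sqrt_sq ((abs_nonneg b).trans hb)]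
  have h_dist (v : ℂ) (hv : ‖v‖ = R) : R - ‖z‖ ≤ ‖z - v‖ := by
    simpa [hv, norm_sub_rev] using norm_sub_norm_le v z
  rw [show (b : ℂ) = w.re from rfl, ← hw, quadratic_eq_mul_sub_conj, norm_mul, pow_two, hw]
  exact mul_le_mul (h_dist w hw) (h_dist _ (by rw [Complex.norm_conj, hw]))
    (by linarith) (norm_nonneg _)

theorem norm_coeff_le_of_hasSum_ofReal {G : ℂ → ℂ} {a : ℕ → ℂ} {ρ M : ℝ} (hρ : 0 < ρ)
    (hG : DiffContOnCl ℂ G (ball 0 ρ)) (hM : ∀ z ∈ sphere (0 : ℂ) ρ, ‖G z‖ ≤ M)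
    (hsum : ∀ᶠ r : ℝ in 𝓝[>] 0, HasSum (fun j => a j * (r : ℂ) ^ j) (G r)) (k : ℕ) :
    ‖a k‖ ≤ M / ρ ^ k := by
  set q := FormalMultilinearSeries.ofScalars ℂ a
  have hq_sum : ∀ z, q.sum z = ∑' j, a j * z ^ j := FormalMultilinearSeries.ofScalars_sum_eq a
  obtain ⟨r, hr_sum, hr⟩ := (hsum.and (self_mem_nhdsWithin (s := Set.Ioi (0 : ℝ)))).exists
  have hq_radius : 0 < q.radius := by
    refine lt_of_lt_of_le (by simpa using hr) (q.le_radius_of_tendsto (r := r.toNNReal) (l := 0) ?_)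
    simpa [q, norm_mul, norm_pow, abs_of_pos hr, hr.le] using
      hr_sum.summable.tendsto_atTop_zero.norm
  have hq_analytic : AnalyticAt ℂ q.sum 0 := (q.hasFPowerSeriesOnBall hq_radius).analyticAt
  have hG_analytic : AnalyticAt ℂ G 0 :=
    hG.differentiableOn.analyticAt (ball_mem_nhds 0 hρ)
  -- The expansion is only known on the positive real axis; the identity theorem extends it to a
  -- neighbourhood of `0` in `ℂ`, which identifies `a` with the Taylor coefficients of `G`.
  have h_freq : ∃ᶠ z in 𝓝[≠] (0 : ℂ), G z = q.sum z := by
    have h_tendsto : Tendsto ((↑) : ℝ → ℂ) (𝓝[>] 0) (𝓝[≠] 0) := by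
      have := Complex.continuous_ofReal.continuousWithinAt.tendsto_nhdsWithin
        (s := Set.Ioi 0) (t := {0}ᶜ) (x := 0) fun r hr => Complex.ofReal_ne_zero.mpr (ne_of_gt hr)
      rwa [Complex.ofReal_zero] at this
    exact h_tendsto.frequently (hsum.mono fun r h => by rw [hq_sum, h.tsum_eq]).frequently
  have h_eq : G =ᶠ[𝓝 0] q.sum :=
    (hG_analytic.frequently_eq_iff_eventually_eq hq_analytic).mp h_freq
  have hG_series : HasFPowerSeriesAt G q 0 :=
    (q.hasFPowerSeriesOnBall hq_radius).hasFPowerSeriesAt.congr h_eq.symm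
  have ha : a k = iteratedDeriv k G 0 / k.factorial := by
    have := FormalMultilinearSeries.ofScalars_series_injective ℂ ℂ
      (hG_series.eq_formalMultilinearSeries hG_analytic.hasFPowerSeriesAt)
    exact congrFun this k
  rw [ha, norm_div, Complex.norm_natCast, div_le_iff₀ (by positivity)]
  calc ‖iteratedDeriv k G 0‖ ≤ k.factorial * M / ρ ^ k :=
        Complex.norm_iteratedDeriv_le_of_forall_mem_sphere_norm_le k hρ hG hM
    _ = M / ρ ^ k * k.factorial := by ring

theorem abs_coeff_le_of_hasSum_quadratic_rpow {b R e c : ℝ} {a : ℕ → ℝ} (hR : 0 < R)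
    (hb : |b| ≤ R) (he : e ≤ 0) (hc : 0 ≤ c)
    (hsum : ∀ r, 0 < r → r < R →
      HasSum (fun j => a j * r ^ j) (c * (r ^ 2 - 2 * b * r + R ^ 2) ^ e))
    (k : ℕ) : |a k| ≤ c * ((R / 4) ^ 2) ^ e / (3 * R / 4) ^ k := by
  set G : ℂ → ℂ := fun z => c * (z ^ 2 - 2 * b * z + R ^ 2) ^ (e : ℂ)
  have hG_diff : DifferentiableOn ℂ G (ball 0 R) := fun z hz =>
    ((((differentiableAt_id.pow 2).sub (differentiableAt_id.const_mul _)).add_const _).cpow_const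
      (quadratic_mem_slitPlane hb (mem_ball_zero_iff.mp hz))).const_mul _ |>.differentiableWithinAt
  have hG_bound : ∀ z ∈ sphere (0 : ℂ) (3 * R / 4), ‖G z‖ ≤ c * ((R / 4) ^ 2) ^ e := by
    intro z hz
    rw [mem_sphere_zero_iff_norm] at hz
    have h_lower := sq_sub_norm_le_norm_quadratic hb (z := z) (by linarith)
    rw [hz, show R - 3 * R / 4 = R / 4 by ring] at h_lower
    simp only [G, norm_mul, Complex.norm_real, Real.norm_of_nonneg hc, Complex.norm_cpow_real]
    exact mul_le_mul_of_nonneg_left (Real.rpow_le_rpow_of_nonpos (by positivity) h_lower he) hc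
  have hG_real : ∀ r, 0 < r → r < R → HasSum (fun j => (a j : ℂ) * (r : ℂ) ^ j) (G r) := by
    intro r hr hrR
    have h_nonneg : 0 ≤ r ^ 2 - 2 * b * r + R ^ 2 := by nlinarith [abs_le.mp hb, sq_nonneg (r - b)]
    have h_complex := Complex.hasSum_ofReal.mpr (hsum r hr hrR)
    push_cast [Complex.ofReal_cpow h_nonneg] at h_complex
    exact h_complex
  have h_near_zero : ∀ᶠ r : ℝ in 𝓝[>] 0, HasSum (fun j => (a j : ℂ) * (r : ℂ) ^ j) (G r) :=
    eventually_of_mem (Ioo_mem_nhdsGT hR) fun r hr => hG_real r hr.1 hr.2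
  simpa using norm_coeff_le_of_hasSum_ofReal (by positivity)
    (hG_diff.diffContOnCl_ball (closedBall_subset_ball (by linarith))) hG_bound h_near_zero k

theorem hasSum_along_ray_of_tsum_eq {E : Type*} [NormedAddCommGroup E] [InnerProductSpace ℝ E]
    {c s : ℝ} {y θ : E} {Γ : ℕ → ℝ} {P : ℕ → E → ℝ} (hc : 0 < c) (hθ : ‖θ‖ = 1)
    (hhom : ∀ j (r : ℝ), 0 ≤ r → P j (r • θ) = r ^ j * P j θ)
    (hexp : ∀ x ∈ ball (0 : E) ‖y‖, c * ‖x - y‖ ^ s = ∑' k, Γ k * P k x)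
    {r : ℝ} (hr : 0 < r) (hry : r < ‖y‖) :
    HasSum (fun j => Γ j * P j θ * r ^ j)
      (c * (r ^ 2 - 2 * inner ℝ θ y * r + ‖y‖ ^ 2) ^ (s / 2)) := by
  have h_norm : ‖r • θ‖ = r := by rw [norm_smul, hθ, Real.norm_of_nonneg hr.le, mul_one]
  have h_sq : ‖r • θ - y‖ ^ 2 = r ^ 2 - 2 * inner ℝ θ y * r + ‖y‖ ^ 2 := by
    rw [norm_sub_sq_real, h_norm, real_inner_smul_left]; ring
  have h_ne : r • θ - y ≠ 0 := fun h => by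
    rw [sub_eq_zero] at h; rw [h] at h_norm; linarith
  have h_tsum := hexp (r • θ) (by rwa [mem_ball_zero_iff, h_norm])
  have h_summable : Summable fun j => Γ j * P j (r • θ) := by
    by_contra h
    rw [tsum_eq_zero_of_not_summable h] at h_tsum
    exact (mul_pos hc (Real.rpow_pos_of_pos (norm_pos_iff.mpr h_ne) s)).ne' h_tsum
  have h_rpow : ‖r • θ - y‖ ^ s = (‖r • θ - y‖ ^ 2) ^ (s / 2) := by
    rw [← Real.rpow_natCast, ← Real.rpow_mul (norm_nonneg _)]; ring_nf
  rw [← h_sq, ← h_rpow, h_tsum]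
  convert h_summable.hasSum using 2 with j
  rw [hhom j r hr.le]; ring

/-- Growth of the coefficients of the spherical-harmonic expansion of the fundamental
solution `Γ(x,y) = c|x−y|^{2−n}` at `0`: `|Γ_k(y)| ≤ C(n) c (4/3)^k |y|^{2−n−k}`. -/
theorem stmt9 (n : ℕ) (hn : 3 ≤ n) :
    ∃ C : ℝ, 0 < C ∧ ∀ (c : ℝ), 0 < c →
    ∀ (y : EuclideanSpace ℝ (Fin n)), y ≠ 0 →
    ∀ (Γ : ℕ → ℝ) (P : ℕ → EuclideanSpace ℝ (Fin n) → ℝ),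
      (∀ k, IsHomHarmPoly k (P k)) →
      (∀ k, (⨍ z in sphere (0 : EuclideanSpace ℝ (Fin n)) 1, (P k z) ^ 2
          ∂(μH[(n : ℝ) - 1])) = 1) →
      (∀ x ∈ ball (0 : EuclideanSpace ℝ (Fin n)) ‖y‖,
        c * ‖x - y‖ ^ ((2 : ℝ) - n) = ∑' k, Γ k * P k x) →
      ∀ k, |Γ k| ≤ C * c * (4 / 3 : ℝ) ^ k * ‖y‖ ^ ((2 : ℝ) - n - k) := by
  refine ⟨4 ^ ((n : ℝ) - 2), by positivity, fun c hc y hy Γ P hP hnorm hexp k => ?_⟩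
  have hR : 0 < ‖y‖ := norm_pos_iff.mpr hy
  obtain ⟨θ, hθ, hθk⟩ := exists_mem_setAverage_le_of_ne_zero ((hnorm k).symm ▸ one_ne_zero)
  rw [hnorm k, ← one_pow 2, sq_le_sq, abs_one] at hθk
  have hθ1 : ‖θ‖ = 1 := mem_sphere_zero_iff_norm.mp hθ
  have hb : |inner ℝ θ y| ≤ ‖y‖ := (abs_real_inner_le_norm θ y).trans_eq (by rw [hθ1, one_mul])
  have he : ((2 : ℝ) - n) / 2 ≤ 0 := by
    have : (3 : ℝ) ≤ n := by exact_mod_cast hn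
    linarith
  have h_coeff := abs_coeff_le_of_hasSum_quadratic_rpow hR hb he hc.le
    (fun r hr hry => hasSum_along_ray_of_tsum_eq hc hθ1 (fun j r hr => (hP j).2.2.1 r θ hr)
      hexp hr hry) k
  calc |Γ k| ≤ |Γ k * P k θ| := by rw [abs_mul]; exact le_mul_of_one_le_right (abs_nonneg _) hθk
    _ ≤ c * ((‖y‖ / 4) ^ 2) ^ (((2 : ℝ) - n) / 2) / (3 * ‖y‖ / 4) ^ k := h_coeff
    _ = 4 ^ ((n : ℝ) - 2) * c * (4 / 3 : ℝ) ^ k * ‖y‖ ^ ((2 : ℝ) - n - k) := by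
      have h4 : (4 : ℝ) ^ ((n : ℝ) - 2) = ((4 : ℝ) ^ ((2 : ℝ) - n))⁻¹ := by
        rw [← Real.rpow_neg (by norm_num), neg_sub]
      rw [h4, ← Real.rpow_natCast (‖y‖ / 4), ← Real.rpow_mul (by positivity),
        Real.div_rpow hR.le (by norm_num), Real.rpow_sub hR, Real.rpow_natCast]
      push_cast
      field_simp
      rw [← mul_pow]
      ring_nf
end

section
/- Let V and W be k-dimensional affine subspaces of ℝ^n, and define d(V,W) as the Hausdorff distance between Ṽ ∩ B_1 and W̃ ∩ B_1, where Ṽ, W̃ are the linear subspaces parallel to V, W. Then for every x ∈ ℝ^n, ‖π_V(x) − π_W(x)‖ ≤ 2 d(V,W) ‖x‖, where π_V, π_W denote the orthogonal projections onto Ṽ and W̃. -/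
/-!
With `a = π_V x`, split `π_V x - π_W x = (a - π_W a) - π_W (x - a)`. Rescaling `a` into the unit
ball of `V` shows `‖a - π_W a‖ ≤ d ‖a‖`. For `y = x - a ⊥ V` and `z = π_W y`,
`‖z‖² = ⟪z, y⟫ = ⟪z - π_V z, y⟫ ≤ d ‖z‖ ‖y‖`, so `‖z‖ ≤ d ‖y‖`. Finally `‖a‖, ‖y‖ ≤ ‖x‖`.
-/

open Metric

namespace Submodule

variable {E : Type*} [NormedAddCommGroup E] [InnerProductSpace ℝ E]

noncomputable def unitSliceDist (K L : Submodule ℝ E) : ℝ :=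
  hausdorffDist ((K : Set E) ∩ closedBall 0 1) ((L : Set E) ∩ closedBall 0 1)

theorem unitSliceDist_comm (K L : Submodule ℝ E) : K.unitSliceDist L = L.unitSliceDist K :=
  hausdorffDist_comm

theorem unitSliceDist_nonneg (K L : Submodule ℝ E) : 0 ≤ K.unitSliceDist L :=
  hausdorffDist_nonneg

theorem zero_mem_inter_closedBall (K : Submodule ℝ E) : (0 : E) ∈ (K : Set E) ∩ closedBall 0 1 :=
  ⟨K.zero_mem, mem_closedBall_self zero_le_one⟩

theorem hausdorffEDist_inter_closedBall_ne_top (K L : Submodule ℝ E) :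
    hausdorffEDist ((K : Set E) ∩ closedBall 0 1) ((L : Set E) ∩ closedBall 0 1) ≠ ⊤ :=
  hausdorffEDist_ne_top_of_nonempty_of_bounded ⟨0, K.zero_mem_inter_closedBall⟩
    ⟨0, L.zero_mem_inter_closedBall⟩ (isBounded_closedBall.subset Set.inter_subset_right)
    (isBounded_closedBall.subset Set.inter_subset_right)

variable {K L : Submodule ℝ E} [L.HasOrthogonalProjection]

theorem norm_sub_starProjection_le_infDist {s : Set E} (hsL : s ⊆ L) (hs : s.Nonempty) (v : E) :
    ‖v - L.starProjection v‖ ≤ infDist v s := by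
  refine (le_infDist hs).2 fun y hy => ?_
  rw [dist_eq_norm, starProjection_minimal]
  exact ciInf_le ⟨0, Set.forall_mem_range.2 fun _ => norm_nonneg _⟩ (⟨y, hsL hy⟩ : L)

theorem norm_sub_starProjection_le_unitSliceDist {u : E} (hu : u ∈ (K : Set E) ∩ closedBall 0 1) :
    ‖u - L.starProjection u‖ ≤ K.unitSliceDist L :=
  (norm_sub_starProjection_le_infDist Set.inter_subset_left ⟨0, L.zero_mem_inter_closedBall⟩
    u).trans
    (infDist_le_hausdorffDist_of_mem hu (hausdorffEDist_inter_closedBall_ne_top K L))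

theorem norm_sub_starProjection_le_of_mem {v : E} (hv : v ∈ K) :
    ‖v - L.starProjection v‖ ≤ K.unitSliceDist L * ‖v‖ := by
  rcases eq_or_ne v 0 with rfl | hv0
  · simp
  have hvn : 0 < ‖v‖ := norm_pos_iff.2 hv0
  have hu : ‖v‖⁻¹ • v ∈ (K : Set E) ∩ closedBall 0 1 :=
    ⟨K.smul_mem _ hv, by simp [norm_smul, hvn.ne']⟩
  have key := norm_sub_starProjection_le_unitSliceDist (L := L) hu
  rw [map_smul, ← smul_sub, norm_smul, norm_inv, norm_norm, inv_mul_le_iff₀ hvn] at key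
  linarith

variable [K.HasOrthogonalProjection]

theorem norm_starProjection_le_of_mem_orthogonal {y : E} (hy : y ∈ Kᗮ) :
    ‖L.starProjection y‖ ≤ K.unitSliceDist L * ‖y‖ := by
  set z := L.starProjection y
  have hzL : z ∈ L := L.starProjection_apply_mem y
  have hzy : ‖z‖ * ‖z‖ = inner ℝ z y := by
    have h := L.starProjection_inner_eq_zero y z hzL
    rw [inner_sub_left, real_inner_comm, real_inner_self_eq_norm_mul_norm] at h
    linarith
  have hsq : ‖z‖ * ‖z‖ = inner ℝ (z - K.starProjection z) y := by
    rw [hzy, inner_sub_left, (K.mem_orthogonal y).1 hy _ (K.starProjection_apply_mem z), sub_zero]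
  have hle : ‖z‖ * ‖z‖ ≤ ‖z‖ * (K.unitSliceDist L * ‖y‖) := by
    calc ‖z‖ * ‖z‖ ≤ ‖z - K.starProjection z‖ * ‖y‖ := hsq ▸ real_inner_le_norm _ _
      _ ≤ L.unitSliceDist K * ‖z‖ * ‖y‖ := by gcongr; exact norm_sub_starProjection_le_of_mem hzL
      _ = ‖z‖ * (K.unitSliceDist L * ‖y‖) := by rw [unitSliceDist_comm]; ring
  rcases (norm_nonneg z).eq_or_lt with hz0 | hz0
  · rw [← hz0]; exact mul_nonneg (unitSliceDist_nonneg K L) (norm_nonneg y)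
  · exact le_of_mul_le_mul_left hle hz0

theorem norm_starProjection_sub_starProjection_le (x : E) :
    ‖K.starProjection x - L.starProjection x‖ ≤ 2 * K.unitSliceDist L * ‖x‖ := by
  set a := K.starProjection x
  have hd := unitSliceDist_nonneg K L
  have hsplit : a - L.starProjection x = (a - L.starProjection a) - L.starProjection (x - a) := by
    rw [map_sub]; abel
  calc ‖a - L.starProjection x‖ ≤ ‖a - L.starProjection a‖ + ‖L.starProjection (x - a)‖ := by
        rw [hsplit]; exact norm_sub_le _ _
    _ ≤ K.unitSliceDist L * ‖a‖ + K.unitSliceDist L * ‖x - a‖ := add_le_add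
        (norm_sub_starProjection_le_of_mem (K.starProjection_apply_mem x))
        (norm_starProjection_le_of_mem_orthogonal (K.sub_starProjection_mem_orthogonal x))
    _ ≤ K.unitSliceDist L * ‖x‖ + K.unitSliceDist L * ‖x‖ := by
        gcongr
        · exact K.norm_starProjection_apply_le x
        · rw [← starProjection_orthogonal_val]; exact Kᗮ.norm_starProjection_apply_le x
    _ = 2 * K.unitSliceDist L * ‖x‖ := by ring

end Submodule

theorem stmt11_general {n : ℕ} (V W : Submodule ℝ (EuclideanSpace ℝ (Fin n)))
    (x : EuclideanSpace ℝ (Fin n)) :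
    ‖(V.orthogonalProjection x : EuclideanSpace ℝ (Fin n)) -
        (W.orthogonalProjection x : EuclideanSpace ℝ (Fin n))‖ ≤
      2 * hausdorffDist ((V : Set (EuclideanSpace ℝ (Fin n))) ∩ closedBall 0 1)
          ((W : Set (EuclideanSpace ℝ (Fin n))) ∩ closedBall 0 1) * ‖x‖ :=
  V.norm_starProjection_sub_starProjection_le x

/-- If `V, W` are `k`-dimensional subspaces of `ℝⁿ` and `d(V,W)` is the Hausdorff
distance between their unit-ball slices, then the orthogonal projections satisfy
`‖π_V(x) − π_W(x)‖ ≤ 2 d(V,W) ‖x‖`. -/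
theorem stmt11 {n k : ℕ} (V W : Submodule ℝ (EuclideanSpace ℝ (Fin n)))
    (hV : Module.finrank ℝ V = k) (hW : Module.finrank ℝ W = k)
    (x : EuclideanSpace ℝ (Fin n)) :
    ‖(V.orthogonalProjection x : EuclideanSpace ℝ (Fin n)) -
        (W.orthogonalProjection x : EuclideanSpace ℝ (Fin n))‖ ≤
      2 * hausdorffDist ((V : Set (EuclideanSpace ℝ (Fin n))) ∩ closedBall 0 1)
          ((W : Set (EuclideanSpace ℝ (Fin n))) ∩ closedBall 0 1) * ‖x‖ :=
  stmt11_general V W x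
end
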